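/- (Tezuka–Fushimi) Let p, q ∈ 𝔽₂[x] with deg p = m ≥ 1, deg q < m, and p, q coprime, and let w ≥ m be an integer word size. For each h ∈ H (the set of polynomials of degree < m) define the two-dimensional point P_h := (ν_w(h), ν_w(h·q %ₘ p)) ∈ [0,1)². Then the family (P_h)_{h ∈ H} is a (0, m, 2)-net in base 2 if and only if there exists a tuple (A_1, …, A_m) ∈ {x, x+1}^m whose Fibonacci polynomials (F_0 = 1, F_1 = A_1, F_k = A_k F_{k−1} + F_{k−2}) satisfy F_m = p and F_{m−1} = q; equivalently, if and only if all partial quotients in the continued fraction expansion of q/p have degree one. -/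

import Mathlib

/-!
The point `P_h` lies in the elementary box of shape `(d₁, d₂)` whose index is read off from the
first `d₁` Laurent digits of `h / p` and the first `d₂` Laurent digits of `(h q %ₘ p) / p`, and the
first `d` digits of `h / p` vanish exactly when `deg h < m - d`. The digits are linear in `h`, and
there are `2 ^ m` polynomials `h` and `2 ^ m` boxes, so the family is a net iff for no
`d₁ + d₂ = m` there is a nonzero `h` with `deg h < d₂` and `deg (h q %ₘ p) < d₁`: the dual lattice
`{(h, g) | p ∣ h q - g}` has no short nonzero vector.

If `deg q < m - 1`, then `(1, q)` is such a short vector. Otherwise `p = a q + r` with `deg a = 1`,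
and `(h, g) ↦ ((h q - g) / p, -g)` matches the dual vectors for `(p, q)` with those for `(q, r)`,
lowering the degree of the first coordinate by one. Induction along the Euclidean algorithm then
identifies the net property with all partial quotients being `X` or `X + 1`, that is with
`(p, q) = (F m, F (m - 1))`.
-/

open Polynomial

/-- The Fibonacci polynomials over `𝔽₂` associated to a sequence of partial
quotients `A`: `F 0 = 1`, `F 1 = A 1`, `F (k+2) = A (k+2) * F (k+1) + F k`. -/
noncomputable def fibPoly (A : ℕ → Polynomial (ZMod 2)) : ℕ → Polynomial (ZMod 2)
  | 0 => 1
  | 1 => A 1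
  | (k + 2) => A (k + 2) * fibPoly A (k + 1) + fibPoly A k

/-- `laurentCoeff p h j` is the coefficient `c_j(h)` of `x^{-j-1}` in the Laurent
expansion of `h(x)/p(x)` at infinity, computed as the `y^j`-coefficient of the
power series `(reflect (m-1) h) * (reverse p)⁻¹` where `m = deg p`. -/
noncomputable def laurentCoeff (p h : Polynomial (ZMod 2)) (j : ℕ) : ZMod 2 :=
  PowerSeries.coeff (R := ZMod 2) j
    ((↑(h.reflect (p.natDegree - 1)) : PowerSeries (ZMod 2)) *
      (↑p.reverse : PowerSeries (ZMod 2))⁻¹)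

/-- `ν_w(h) = Σ_{j<w} c_j(h) 2^{-j-1} ∈ [0,1)`. -/
noncomputable def nuW (w : ℕ) (p h : Polynomial (ZMod 2)) : ℝ :=
  ∑ j ∈ Finset.range w, ((laurentCoeff p h j).val : ℝ) / 2 ^ (j + 1)

theorem Set.existsUnique_iff_injOn {α β : Type*} {s : Set α} {t : Set β} {f : α → β}
    (hf : Set.MapsTo f s t) (ht : t.Finite) (hcard : t.ncard ≤ s.ncard) :
    (∀ b ∈ t, ∃! a, a ∈ s ∧ f a = b) ↔ Set.InjOn f s := by
  refine ⟨fun H a ha a' ha' e ↦ ?_, fun hinj b hb ↦ ?_⟩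
  · obtain ⟨_, _, huniq⟩ := H (f a) (hf ha)
    exact (huniq a ⟨ha, rfl⟩).trans (huniq a' ⟨ha', e.symm⟩).symm
  · have himage : f '' s = t :=
      Set.eq_of_subset_of_ncard_le hf.image_subset (hinj.ncard_image ▸ hcard) ht
    obtain ⟨a, ha, rfl⟩ := himage ▸ hb
    exact ⟨a, ⟨ha, rfl⟩, fun a' ⟨ha', e⟩ ↦ hinj ha' ha e⟩

theorem Polynomial.ncard_setOf_degree_lt (R : Type*) [Semiring R] [Finite R] (m : ℕ) :
    {h : R[X] | h.degree < m}.ncard = Nat.card R ^ m := by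
  have : {h : R[X] | h.degree < m} = degreeLT R m := by ext; simp [mem_degreeLT]
  rw [this, ← Nat.card_coe_set_eq, SetLike.coe_sort_coe,
    Nat.card_congr (degreeLTEquiv R m).toEquiv, Nat.card_fun, Nat.card_fin]

theorem Polynomial.Monic.degree_mul_lt_iff {R : Type*} [Semiring R] [Nontrivial R] {q : R[X]}
    (hq : q.Monic) {h : R[X]} {d : ℕ} : (h * q).degree < ↑(d + q.natDegree) ↔ h.degree < d := by
  rw [hq.degree_mul, degree_eq_natDegree hq.ne_zero]
  rcases eq_or_ne h 0 with rfl | h0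
  · simp
  rw [degree_eq_natDegree h0]
  norm_cast
  omega

theorem IsCoprime.modByMonic {R : Type*} [CommRing R] {p q : R[X]} (h : IsCoprime p q) :
    IsCoprime q (p %ₘ q) := by
  rw [modByMonic_eq_sub_mul_div, sub_eq_add_neg, ← mul_neg]
  exact h.symm.add_mul_left_right _

theorem monic_zmod_two_of_ne_zero {p : (ZMod 2)[X]} (hp : p ≠ 0) : p.Monic := by
  have : ∀ a : ZMod 2, a ≠ 0 → a = 1 := by decide
  exact this _ (leadingCoeff_ne_zero.mpr hp)

theorem monic_zmod_two_of_degree_eq {p : (ZMod 2)[X]} {n : ℕ} (hp : p.degree = n) : p.Monic :=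
  monic_zmod_two_of_ne_zero (by rintro rfl; simp at hp)

def binIndex (c : ℕ → ZMod 2) : ℕ → ℕ
  | 0 => 0
  | d + 1 => 2 * binIndex c d + (c d).val

namespace binIndex

variable (c : ℕ → ZMod 2)

theorem lt_two_pow (d : ℕ) : binIndex c d < 2 ^ d := by
  induction d with
  | zero => simp [binIndex]
  | succ d ih => have := (c d).val_lt; rw [binIndex, pow_succ]; omega

theorem add (d k : ℕ) :
    binIndex c (d + k) = 2 ^ k * binIndex c d + binIndex (fun j ↦ c (d + j)) k := by
  induction k with
  | zero => simp [binIndex]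
  | succ k ih => rw [← add_assoc, binIndex, binIndex, ih, pow_succ]; ring

theorem div_two_pow {d w : ℕ} (hdw : d ≤ w) : binIndex c w / 2 ^ (w - d) = binIndex c d := by
  obtain ⟨k, rfl⟩ := Nat.exists_eq_add_of_le hdw
  rw [add, Nat.add_sub_cancel_left, Nat.mul_add_div (by positivity),
    Nat.div_eq_of_lt (lt_two_pow _ k), add_zero]

theorem eq_iff_digits_eq {c' : ℕ → ZMod 2} {d : ℕ} :
    binIndex c d = binIndex c' d ↔ ∀ j < d, c j = c' j := by
  induction d with
  | zero => simp [binIndex]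
  | succ d ih =>
    have := (c d).val_lt
    have := (c' d).val_lt
    rw [binIndex, binIndex, Nat.forall_lt_succ_right, ← ih, ← (ZMod.val_injective 2).eq_iff]
    omega

theorem sum_div_two_pow (w : ℕ) :
    ∑ j ∈ Finset.range w, ((c j).val : ℝ) / 2 ^ (j + 1) = binIndex c w / 2 ^ w := by
  induction w with
  | zero => simp [binIndex]
  | succ w ih =>
    rw [Finset.sum_range_succ, ih, binIndex]
    push_cast
    field_simp
    ring

end binIndex

theorem mem_dyadic_interval_iff {N r d w : ℕ} (hdw : d ≤ w) :
    ((r : ℝ) / 2 ^ d ≤ N / 2 ^ w ∧ (N : ℝ) / 2 ^ w < (r + 1) / 2 ^ d) ↔ N / 2 ^ (w - d) = r := by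
  have hw : (N : ℝ) / 2 ^ w = (N : ℝ) / (2 ^ (w - d) : ℕ) / 2 ^ d := by
    rw [div_div, Nat.cast_pow, Nat.cast_ofNat, ← pow_add, Nat.sub_add_cancel hdw]
  rw [hw, div_le_div_iff_of_pos_right (by positivity), div_lt_div_iff_of_pos_right (by positivity),
    ← Nat.floor_div_eq_div (K := ℝ), Nat.floor_eq_iff (by positivity)]

theorem nuW_mem_dyadic_interval_iff {p h : (ZMod 2)[X]} {r d w : ℕ} (hdw : d ≤ w) :
    ((r : ℝ) / 2 ^ d ≤ nuW w p h ∧ nuW w p h < (r + 1) / 2 ^ d) ↔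
      binIndex (laurentCoeff p h) d = r := by
  rw [nuW, binIndex.sum_div_two_pow, mem_dyadic_interval_iff hdw, binIndex.div_two_pow _ hdw]

theorem laurentCoeff_sub (p a b : (ZMod 2)[X]) (j : ℕ) :
    laurentCoeff p (a - b) j = laurentCoeff p a j - laurentCoeff p b j := by
  simp only [laurentCoeff, reflect_sub, Polynomial.coe_sub, sub_mul, map_sub]

theorem forall_laurentCoeff_eq_zero_iff {p h : (ZMod 2)[X]} (hp : p.Monic)
    (hh : h.degree < p.natDegree) {d : ℕ} (hd : d ≤ p.natDegree) :
    (∀ j < d, laurentCoeff p h j = 0) ↔ h.degree < ↑(p.natDegree - d) := by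
  have hunit : IsUnit (↑p.reverse : PowerSeries (ZMod 2))⁻¹ := by
    refine .of_mul_eq_one_right _ (PowerSeries.mul_inv_cancel _ ?_)
    simp [← PowerSeries.coeff_zero_eq_constantCoeff_apply, coeff_zero_reverse, hp.leadingCoeff]
  simp only [laurentCoeff]
  rw [← PowerSeries.X_pow_dvd_iff, hunit.dvd_mul_right, PowerSeries.X_pow_dvd_iff]
  simp only [Polynomial.coeff_coe, coeff_reflect]
  rw [degree_lt_iff_coeff_zero] at hh ⊢
  constructor
  · intro H k hk
    by_cases hkm : p.natDegree ≤ k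
    · exact hh k hkm
    · simpa [revAt_le, show p.natDegree - 1 - (p.natDegree - 1 - k) = k by omega]
        using H (p.natDegree - 1 - k) (by omega)
  · intro H j hj
    rw [revAt_le (by omega)]
    exact H _ (by omega)

/-- `{(h, g) | p ∣ h q - g}` is the dual lattice of the polynomial lattice rule with generating
vector `(1, q)` modulo `p`. -/
def NoShortDualVector {R : Type*} [CommRing R] (m : ℕ) (p q : R[X]) : Prop :=
  ∀ d₁ d₂ : ℕ, d₁ + d₂ = m → ∀ h g : R[X], p ∣ h * q - g → h.degree < d₂ → g.degree < d₁ → h = 0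

/-- The index of the elementary dyadic box of shape `2^{-d₁} × 2^{-d₂}` containing
`(ν_w(h), ν_w(h q %ₘ p))`, for any `w ≥ d₁, d₂`. -/
noncomputable def cellIndex (p q : (ZMod 2)[X]) (d₁ d₂ : ℕ) (h : (ZMod 2)[X]) : ℕ × ℕ :=
  (binIndex (laurentCoeff p h) d₁, binIndex (laurentCoeff p (h * q %ₘ p)) d₂)

theorem binIndex_laurentCoeff_eq_iff {p a b : (ZMod 2)[X]} (hp : p.Monic)
    (ha : a.degree < p.natDegree) (hb : b.degree < p.natDegree) {d : ℕ} (hd : d ≤ p.natDegree) :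
    binIndex (laurentCoeff p a) d = binIndex (laurentCoeff p b) d ↔
      (a - b).degree < ↑(p.natDegree - d) := by
  rw [binIndex.eq_iff_digits_eq, ← forall_laurentCoeff_eq_zero_iff hp
    ((degree_sub_le a b).trans_lt (max_lt ha hb)) hd]
  simp only [laurentCoeff_sub, sub_eq_zero]

theorem injOn_cellIndex_iff {p q : (ZMod 2)[X]} (hp : p.Monic) {d₁ d₂ : ℕ}
    (hd : d₁ + d₂ = p.natDegree) :
    Set.InjOn (cellIndex p q d₁ d₂) {h | h.degree < p.natDegree} ↔
      ∀ h : (ZMod 2)[X], h.degree < d₂ → (h * q %ₘ p).degree < d₁ → h = 0 := by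
  have hmod (h : (ZMod 2)[X]) : (h * q %ₘ p).degree < p.natDegree :=
    degree_eq_natDegree hp.ne_zero ▸ degree_modByMonic_lt _ hp
  have hsame (a b : (ZMod 2)[X]) (ha : a.degree < p.natDegree) (hb : b.degree < p.natDegree) :
      cellIndex p q d₁ d₂ a = cellIndex p q d₁ d₂ b ↔
        (a - b).degree < d₂ ∧ ((a - b) * q %ₘ p).degree < d₁ := by
    rw [cellIndex, cellIndex, Prod.mk.injEq, binIndex_laurentCoeff_eq_iff hp ha hb (by omega),
      binIndex_laurentCoeff_eq_iff hp (hmod a) (hmod b) (by omega), sub_mul, sub_modByMonic,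
      show p.natDegree - d₁ = d₂ by omega, show p.natDegree - d₂ = d₁ by omega]
  have hle : (d₂ : WithBot ℕ) ≤ p.natDegree := by exact_mod_cast (by omega : d₂ ≤ p.natDegree)
  constructor
  · intro hinj h hh hq
    have h0 : (0 : (ZMod 2)[X]).degree < p.natDegree := by simp
    exact hinj (hh.trans_le hle) h0 ((hsame _ _ (hh.trans_le hle) h0).mpr (by simpa using ⟨hh, hq⟩))
  · intro H a ha b hb e
    exact sub_eq_zero.mp (H _ ((hsame a b ha hb).mp e).1 ((hsame a b ha hb).mp e).2)

theorem forall_modByMonic_iff_forall_dvd_sub {R : Type*} [CommRing R] [Nontrivial R]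
    {p q : R[X]} (hp : p.Monic) {d₁ d₂ : ℕ} (hd : d₁ ≤ p.natDegree) :
    (∀ h : R[X], h.degree < d₂ → (h * q %ₘ p).degree < d₁ → h = 0) ↔
      ∀ h g : R[X], p ∣ h * q - g → h.degree < d₂ → g.degree < d₁ → h = 0 := by
  refine ⟨fun H h g hdvd hh hg ↦ H h hh ?_, fun H h hh hmod ↦ H h _ ?_ hh hmod⟩
  · rwa [modByMonic_eq_of_dvd_sub hp hdvd, (modByMonic_eq_self_iff hp).mpr]
    exact hg.trans_le ((WithBot.coe_le_coe.mpr hd).trans_eq (degree_eq_natDegree hp.ne_zero).symm)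
  · rw [modByMonic_eq_sub_mul_div, sub_sub_cancel]
    exact dvd_mul_right _ _

theorem isNet_iff_noShortDualVector {m w : ℕ} (hw : m ≤ w) {p q : (ZMod 2)[X]}
    (hp : p.degree = m) :
    (∀ d₁ d₂ : ℕ, d₁ + d₂ = m → ∀ r₁ r₂ : ℕ, r₁ < 2 ^ d₁ → r₂ < 2 ^ d₂ →
        ∃! h : (ZMod 2)[X], h.degree < m ∧
          ((r₁ : ℝ) / 2 ^ d₁ ≤ nuW w p h ∧ nuW w p h < ((r₁ : ℝ) + 1) / 2 ^ d₁) ∧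
          ((r₂ : ℝ) / 2 ^ d₂ ≤ nuW w p (h * q %ₘ p) ∧
            nuW w p (h * q %ₘ p) < ((r₂ : ℝ) + 1) / 2 ^ d₂)) ↔
      NoShortDualVector m p q := by
  have hpm : p.Monic := monic_zmod_two_of_degree_eq hp
  obtain rfl : p.natDegree = m := natDegree_eq_of_degree_eq_some hp
  refine forall₃_congr fun d₁ d₂ hd ↦ ?_
  have hmaps : Set.MapsTo (cellIndex p q d₁ d₂) {h | h.degree < p.natDegree}
      (Set.Iio (2 ^ d₁) ×ˢ Set.Iio (2 ^ d₂)) :=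
    fun h _ ↦ ⟨binIndex.lt_two_pow _ _, binIndex.lt_two_pow _ _⟩
  have hcard : (Set.Iio (2 ^ d₁) ×ˢ Set.Iio (2 ^ d₂)).ncard ≤
      {h : (ZMod 2)[X] | h.degree < p.natDegree}.ncard := by
    rw [Set.ncard_prod, Set.ncard_Iio_nat, Set.ncard_Iio_nat, ncard_setOf_degree_lt, Nat.card_zmod,
      ← pow_add, hd]
  rw [← forall_modByMonic_iff_forall_dvd_sub hpm (by omega), ← injOn_cellIndex_iff hpm hd,
    ← Set.existsUnique_iff_injOn hmaps ((Set.finite_Iio _).prod (Set.finite_Iio _)) hcard]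
  simp only [nuW_mem_dyadic_interval_iff (show d₁ ≤ w by omega),
    nuW_mem_dyadic_interval_iff (show d₂ ≤ w by omega), Prod.forall, Set.mem_prod, Set.mem_Iio,
    Set.mem_ofPred_eq, cellIndex, Prod.mk.injEq, and_imp]

theorem noShortDualVector_zero {R : Type*} [CommRing R] (p q : R[X]) :
    NoShortDualVector 0 p q := by
  intro d₁ d₂ hd h g _ hh _
  obtain rfl : d₂ = 0 := by omega
  simpa using hh

/-- One step of the Euclidean algorithm `p = (p /ₘ q) q + p %ₘ q` turns a dual vector `(h, g)`
for `(p, q)` into the dual vector `(k, -g)` for `(q, p %ₘ q)`, where `h q - g = k p`; this lowers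
the degree of the first coordinate by exactly one. -/
theorem noShortDualVector_succ_iff {R : Type*} [CommRing R] [Nontrivial R] {n : ℕ} {p q : R[X]}
    (hp : p.Monic) (hq : q.Monic) (hpn : p.natDegree = n + 1) (hqn : q.natDegree = n) :
    NoShortDualVector (n + 1) p q ↔ NoShortDualVector n q (p %ₘ q) := by
  have hdiv := modByMonic_add_div p q
  set a := p /ₘ q
  constructor
  · intro H d₁ d₂ hd g t ⟨k, hk⟩ hg ht
    have hht : (g * a + k) * q = g * p - t := by linear_combination g * hdiv - hk
    have hh : (g * a + k).degree < ↑(d₂ + 1) := by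
      rw [← hq.degree_mul_lt_iff, hht]
      refine (degree_sub_le _ _).trans_lt (max_lt ?_ ?_)
      · exact (hp.degree_mul_lt_iff.mpr hg).trans_le (by rw [hpn, hqn]; exact_mod_cast (by omega))
      · exact ht.trans_le (by exact_mod_cast (by omega))
    have h0 := H d₁ (d₂ + 1) (by omega) _ (-t) ⟨g, by rw [sub_neg_eq_add, hht]; ring⟩ hh
      (by rwa [degree_neg])
    rw [h0, zero_mul, eq_comm, sub_eq_zero] at hht
    have hgp : (g * p).degree < ↑(0 + p.natDegree) :=
      hht ▸ ht.trans_le (by rw [hpn]; exact_mod_cast (by omega))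
    simpa using hp.degree_mul_lt_iff.mp hgp
  · intro H d₁ d₂ hd h g ⟨k, hk⟩ hh hg
    rcases d₂ with _ | e
    · simpa using hh
    have hkdeg : k.degree < e := by
      rw [← hp.degree_mul_lt_iff, mul_comm, ← hk]
      refine (degree_sub_le _ _).trans_lt (max_lt ?_ ?_)
      · exact (hq.degree_mul_lt_iff.mpr hh).trans_le (by rw [hpn, hqn]; exact_mod_cast (by omega))
      · exact hg.trans_le (by exact_mod_cast (by omega))
    have k0 := H d₁ e (by omega) k (-g) ⟨h - k * a, by linear_combination k * hdiv - hk⟩ hkdeg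
      (by rwa [degree_neg])
    rw [k0, mul_zero, sub_eq_zero] at hk
    have hhq : (h * q).degree < ↑(0 + q.natDegree) :=
      hk ▸ hg.trans_le (by rw [hqn]; exact_mod_cast (by omega))
    simpa using hq.degree_mul_lt_iff.mp hhq

theorem NoShortDualVector.degree_eq {R : Type*} [CommRing R] [Nontrivial R] {n : ℕ}
    {p q : R[X]} (H : NoShortDualVector (n + 1) p q) (hq : q.degree < ↑(n + 1)) :
    q.degree = n := by
  have hge : ¬ q.degree < n := fun hlt ↦ one_ne_zero (H n 1 rfl 1 q (by simp) (by simp) hlt)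
  rcases eq_or_ne q 0 with rfl | hq0
  · simp at hge
  rw [degree_eq_natDegree hq0] at hge hq ⊢
  norm_cast at hge hq ⊢
  omega

theorem degree_eq_one_iff_zmod_two {a : (ZMod 2)[X]} : a.degree = 1 ↔ a = X ∨ a = X + 1 := by
  refine ⟨fun ha ↦ ?_, by rintro (rfl | rfl) <;> compute_degree!⟩
  have hlead : a.coeff 1 = 1 := by
    have := monic_zmod_two_of_ne_zero (p := a) (by rintro rfl; simp at ha)
    rwa [Monic, leadingCoeff, natDegree_eq_of_degree_eq_some ha] at this
  have hlin := eq_X_add_C_of_degree_le_one ha.le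
  rw [hlead, C_1, one_mul] at hlin
  rcases (by decide : ∀ c : ZMod 2, c = 0 ∨ c = 1) (a.coeff 0) with h0 | h0 <;>
    rw [h0] at hlin <;> simp [hlin]

theorem fibPoly_congr {A B : ℕ → (ZMod 2)[X]} {n : ℕ} (h : ∀ k ≤ n, A k = B k) :
    fibPoly A n = fibPoly B n := by
  induction n using fibPoly.induct with
  | case1 => rfl
  | case2 => simp [fibPoly, h 1 le_rfl]
  | case3 k ih₁ ih₀ =>
    simp only [fibPoly]
    rw [h (k + 2) le_rfl, ih₁ fun j hj ↦ h j (by omega), ih₀ fun j hj ↦ h j (by omega)]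

theorem degree_fibPoly {A : ℕ → (ZMod 2)[X]} {n : ℕ}
    (hA : ∀ k, 1 ≤ k → k ≤ n → A k = X ∨ A k = X + 1) : (fibPoly A n).degree = n := by
  induction n using fibPoly.induct with
  | case1 => simp [fibPoly]
  | case2 => simpa [fibPoly] using degree_eq_one_iff_zmod_two.mpr (hA 1 le_rfl le_rfl)
  | case3 k ih₁ ih₀ =>
    have hmul : (A (k + 2) * fibPoly A (k + 1)).degree = ↑(k + 2) := by
      rw [degree_mul, degree_eq_one_iff_zmod_two.mpr (hA _ (by omega) le_rfl),
        ih₁ fun j h₁ h₂ ↦ hA j h₁ (by omega)]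
      exact_mod_cast (by omega : 1 + (k + 1) = k + 2)
    rw [fibPoly, degree_add_eq_left_of_degree_lt, hmul]
    rw [hmul, ih₀ fun j h₁ h₂ ↦ hA j h₁ (by omega)]
    exact_mod_cast (by omega : k < k + 2)

def IsFibonacciPair (m : ℕ) (p q : (ZMod 2)[X]) : Prop :=
  ∃ A : ℕ → (ZMod 2)[X], (∀ k, 1 ≤ k → k ≤ m → A k = X ∨ A k = X + 1) ∧
    fibPoly A m = p ∧ fibPoly A (m - 1) = q

theorem IsFibonacciPair.degree_snd {n : ℕ} {p q : (ZMod 2)[X]} (h : IsFibonacciPair (n + 1) p q) :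
    q.degree = n := by
  obtain ⟨A, hA, -, rfl⟩ := h
  exact degree_fibPoly fun k h₁ h₂ ↦ hA k h₁ (by omega)

theorem isFibonacciPair_succ_succ_iff {n : ℕ} {p q : (ZMod 2)[X]} (hp : p.natDegree = n + 2) :
    IsFibonacciPair (n + 2) p q ↔ IsFibonacciPair (n + 1) q (p %ₘ q) := by
  constructor
  · rintro ⟨A, hA, rfl, rfl⟩
    have hdeg {j} (hj : j ≤ n + 2) : (fibPoly A j).degree = j :=
      degree_fibPoly fun k h₁ h₂ ↦ hA k h₁ (by omega)
    refine ⟨A, fun k h₁ h₂ ↦ hA k h₁ (by omega), rfl, ?_⟩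
    show fibPoly A n = fibPoly A (n + 2) %ₘ fibPoly A (n + 1)
    refine (div_modByMonic_unique (A (n + 2)) _ (monic_zmod_two_of_degree_eq (hdeg (by omega)))
      ⟨by simp only [fibPoly]; ring, ?_⟩).2.symm
    rw [hdeg (by omega), hdeg (by omega)]
    exact_mod_cast (by omega : n < n + 1)
  · rintro ⟨A, hA, hq, hr⟩
    have hqdeg : q.degree = ↑(n + 1) := hq ▸ degree_fibPoly hA
    have hqm := monic_zmod_two_of_degree_eq hqdeg
    have hquot : (p /ₘ q).degree = 1 := by
      rw [← Nat.cast_one, degree_eq_iff_natDegree_eq_of_pos one_pos, natDegree_divByMonic _ hqm,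
        hp, natDegree_eq_of_degree_eq_some hqdeg]
      omega
    have hB {j} (hj : j ≤ n + 1) : fibPoly (Function.update A (n + 2) (p /ₘ q)) j = fibPoly A j :=
      fibPoly_congr fun k hk ↦ Function.update_of_ne (by omega) _ _
    refine ⟨Function.update A (n + 2) (p /ₘ q), fun k h₁ h₂ ↦ ?_, ?_, (hB le_rfl).trans hq⟩
    · rcases eq_or_lt_of_le h₂ with rfl | hk
      · simpa using degree_eq_one_iff_zmod_two.mp hquot
      · simpa [Function.update_of_ne hk.ne] using hA k h₁ (by omega)
    · rw [Nat.add_sub_cancel] at hr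
      rw [fibPoly, hB le_rfl, hB (by omega), Function.update_self, hq, hr]
      linear_combination modByMonic_add_div p q

theorem noShortDualVector_iff_isFibonacciPair {n : ℕ} {p q : (ZMod 2)[X]}
    (hp : p.degree = ↑(n + 1)) (hq : q.degree < ↑(n + 1)) (hpq : IsCoprime p q) :
    NoShortDualVector (n + 1) p q ↔ IsFibonacciPair (n + 1) p q := by
  induction n generalizing p q with
  | zero =>
    have hpn := natDegree_eq_of_degree_eq_some hp
    have hq0 : q ≠ 0 := by
      rintro rfl
      exact not_isUnit_of_degree_pos p (by rw [hp]; exact_mod_cast one_pos)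
        (isCoprime_zero_right.mp hpq)
    obtain rfl : q = 1 := eq_one_of_monic_natDegree_zero (monic_zmod_two_of_ne_zero hq0)
      (by simpa using (natDegree_lt_iff_degree_lt hq0).mpr hq)
    have hnet : NoShortDualVector 1 p 1 :=
      (noShortDualVector_succ_iff (monic_zmod_two_of_degree_eq hp) monic_one hpn
        natDegree_one).mpr (noShortDualVector_zero _ _)
    exact iff_of_true hnet
      ⟨fun _ ↦ p, fun _ _ _ ↦ degree_eq_one_iff_zmod_two.mp hp, rfl, rfl⟩
  | succ n ih =>
    suffices key : q.degree = ↑(n + 1) →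
        (NoShortDualVector (n + 2) p q ↔ IsFibonacciPair (n + 2) p q) from
      ⟨fun H ↦ (key (H.degree_eq hq)).mp H, fun H ↦ (key H.degree_snd).mpr H⟩
    intro hqn
    have hpn := natDegree_eq_of_degree_eq_some hp
    have hqm := monic_zmod_two_of_degree_eq hqn
    rw [noShortDualVector_succ_iff (monic_zmod_two_of_degree_eq hp) hqm hpn
      (natDegree_eq_of_degree_eq_some hqn), isFibonacciPair_succ_succ_iff hpn]
    exact ih hqn ((degree_modByMonic_lt p hqm).trans_eq hqn) hpq.modByMonic

/-- (Tezuka–Fushimi) For coprime `p, q` with `deg p = m ≥ 1`, `deg q < m`, and a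
word size `w ≥ m`, the two-dimensional point family
`h ↦ (ν_w(h), ν_w(h·q %ₘ p))`, indexed by polynomials `h` of degree `< m`, is a
`(0, m, 2)`-net in base `2` if and only if `(p, q) = (F m, F (m-1))` for the
Fibonacci polynomials of some tuple `(A 1, …, A m) ∈ {x, x+1}^m`, i.e. iff all
partial quotients of the continued fraction of `q / p` have degree one. -/
theorem tezuka_fushimi (m w : ℕ) (hm : 1 ≤ m) (hw : m ≤ w)
    (p q : Polynomial (ZMod 2)) (hp : p.degree = (m : WithBot ℕ))
    (hq : q.degree < (m : WithBot ℕ)) (hcop : IsCoprime p q) :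
    ((∀ d₁ d₂ : ℕ, d₁ + d₂ = m → ∀ r₁ r₂ : ℕ, r₁ < 2 ^ d₁ → r₂ < 2 ^ d₂ →
        ∃! h : Polynomial (ZMod 2), h.degree < (m : WithBot ℕ) ∧
          ((r₁ : ℝ) / 2 ^ d₁ ≤ nuW w p h ∧ nuW w p h < ((r₁ : ℝ) + 1) / 2 ^ d₁) ∧
          ((r₂ : ℝ) / 2 ^ d₂ ≤ nuW w p (h * q %ₘ p) ∧
            nuW w p (h * q %ₘ p) < ((r₂ : ℝ) + 1) / 2 ^ d₂)) ↔
      ∃ A : ℕ → Polynomial (ZMod 2),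
        (∀ k, 1 ≤ k → k ≤ m → A k = X ∨ A k = X + 1) ∧
        fibPoly A m = p ∧ fibPoly A (m - 1) = q) := by
  obtain ⟨n, rfl⟩ := Nat.exists_eq_add_of_le' hm
  exact (isNet_iff_noShortDualVector hw hp).trans (noShortDualVector_iff_isFibonacciPair hp hq hcop)
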